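/- arXiv:2411.04939 — 2 statements merged into one kernel-verified Lean document; each statement's English description precedes it below -/
import Mathlib

section
/- Let Σ be a d×d positive definite real matrix and V a d×d diagonal positive definite matrix, and define d_Σ := 𝟙_dᵀ (V^{-1/2} Σ⁻¹ V^{-1/2}) 𝟙_d, where 𝟙_d is the all-ones vector. Then for every x ∈ ℝ^d, ∏_{c=1}^d R((V^{-1/2}Σ⁻¹x)_c) ≥ R( (√(d_Σ)/d) · √(xᵀΣ⁻¹x) )^d, where R is the Mills ratio of the standard normal distribution. -/
/-!
Substituting `t = x + s` writes the Mills ratio as a Laplace transform,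
`R(x) = ∫_0^∞ e^{-xs} e^{-s²/2} ds`, so `R` is positive, decreasing and, by Hölder's inequality,
log-convex. Jensen's inequality for `log R` bounds `∏_c R(y_c)` below by `R(ȳ)^d`, where `ȳ` is the
mean of `y = V^{-1/2} Σ⁻¹ x`. Finally `d ȳ = 𝟙ᵀ V^{-1/2} Σ⁻¹ x` is at most `√d_Σ · √(xᵀ Σ⁻¹ x)` by
the Cauchy–Schwarz inequality for the inner product defined by `Σ⁻¹`, and `R` is decreasing.
-/

open Matrix

/-- The Mills ratio of the standard normal distribution:
`R(x) = e^{x²/2} ∫_x^∞ e^{-t²/2} dt`. -/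
noncomputable def millsRatio (x : ℝ) : ℝ :=
  Real.exp (x ^ 2 / 2) * ∫ t in Set.Ioi x, Real.exp (-t ^ 2 / 2)

open MeasureTheory Real Set

theorem integral_rpow_mul_rpow_le {α : Type*} [MeasurableSpace α] {μ : Measure α}
    {f g : α → ℝ} (hf0 : 0 ≤ᵐ[μ] f) (hg0 : 0 ≤ᵐ[μ] g) (hf : Integrable f μ)
    (hg : Integrable g μ) {p q : ℝ} (hp : 0 ≤ p) (hq : 0 ≤ q) (hpq : p + q = 1) :
    ∫ a, f a ^ p * g a ^ q ∂μ ≤ (∫ a, f a ∂μ) ^ p * (∫ a, g a ∂μ) ^ q := by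
  have hf' := integral_nonneg_of_ae hf0
  have hg' := integral_nonneg_of_ae hg0
  have hrhs : 0 ≤ (∫ a, f a ∂μ) ^ p * (∫ a, g a ∂μ) ^ q := by positivity
  by_cases hfg : Integrable (fun a => f a ^ p * g a ^ q) μ
  swap
  · rw [integral_undef hfg]
    exact hrhs
  have hfg0 : 0 ≤ᵐ[μ] fun a => f a ^ p * g a ^ q := by
    filter_upwards [hf0, hg0] with a ha hb
    exact mul_nonneg (rpow_nonneg ha p) (rpow_nonneg hb q)
  rw [← ENNReal.ofReal_le_ofReal_iff hrhs, ofReal_integral_eq_lintegral_ofReal hfg hfg0,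
    ENNReal.ofReal_mul (by positivity), ← ENNReal.ofReal_rpow_of_nonneg hf' hp,
    ← ENNReal.ofReal_rpow_of_nonneg hg' hq, ofReal_integral_eq_lintegral_ofReal hf hf0,
    ofReal_integral_eq_lintegral_ofReal hg hg0]
  calc ∫⁻ a, ENNReal.ofReal (f a ^ p * g a ^ q) ∂μ
      = ∫⁻ a, ENNReal.ofReal (f a) ^ p * ENNReal.ofReal (g a) ^ q ∂μ := by
        refine lintegral_congr_ae ?_
        filter_upwards [hf0, hg0] with a ha hb
        rw [ENNReal.ofReal_mul (rpow_nonneg ha p), ENNReal.ofReal_rpow_of_nonneg ha hp,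
          ENNReal.ofReal_rpow_of_nonneg hb hq]
    _ ≤ _ := ENNReal.lintegral_mul_norm_pow_le hf.aemeasurable.ennreal_ofReal
        hg.aemeasurable.ennreal_ofReal hp hq hpq

theorem pow_le_prod_of_convexOn_log {ι : Type*} [Fintype ι] {f : ℝ → ℝ} (hf : ∀ x, 0 < f x)
    (hconv : ConvexOn ℝ univ fun x => log (f x)) (y : ι → ℝ) :
    f ((∑ i, y i) / Fintype.card ι) ^ Fintype.card ι ≤ ∏ i, f (y i) := by
  rcases isEmpty_or_nonempty ι with hι | hι
  · simp
  have hn : (0 : ℝ) < Fintype.card ι := by exact_mod_cast Fintype.card_pos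
  have hjensen := hconv.map_sum_le (t := Finset.univ) (w := fun _ => (Fintype.card ι : ℝ)⁻¹)
    (p := y) (fun _ _ => by positivity) (by simp [hn.ne']) (fun _ _ => mem_univ _)
  simp only [smul_eq_mul, ← Finset.mul_sum] at hjensen
  rw [← log_le_log_iff (pow_pos (hf _) _) (Finset.prod_pos fun i _ => hf (y i)), log_pow,
    log_prod fun i _ => (hf (y i)).ne', div_eq_inv_mul]
  exact (le_inv_mul_iff₀ hn).mp hjensen

theorem integrable_exp_neg_mul_sub_sq_div_two (x : ℝ) :
    Integrable fun s : ℝ => exp (-(x * s) - s ^ 2 / 2) := by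
  have hgauss : Integrable fun t : ℝ => exp (-(1 / 2) * t ^ 2) :=
    integrable_exp_neg_mul_sq (by norm_num)
  refine ((hgauss.comp_add_right x).const_mul (exp (x ^ 2 / 2))).congr
    (Filter.Eventually.of_forall fun s => ?_)
  simp only [← exp_add]
  ring_nf

theorem millsRatio_eq_integral (x : ℝ) :
    millsRatio x = ∫ s in Ioi 0, exp (-(x * s) - s ^ 2 / 2) := by
  have hshift : ∫ t in Ioi x, exp (-t ^ 2 / 2) = ∫ s in Ioi 0, exp (-(s + x) ^ 2 / 2) := by
    rw [← (measurePreserving_add_right volume x).setIntegral_preimage_emb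
      (measurableEmbedding_addRight x)]
    simp
  rw [millsRatio, hshift, ← integral_const_mul]
  refine setIntegral_congr_fun measurableSet_Ioi fun s _ => ?_
  simp only [← exp_add]
  ring_nf

theorem millsRatio_pos (x : ℝ) : 0 < millsRatio x := by
  rw [millsRatio_eq_integral, setIntegral_pos_iff_support_of_nonneg_ae
    (Filter.Eventually.of_forall fun s => (exp_pos _).le)
    (integrable_exp_neg_mul_sub_sq_div_two x).integrableOn]
  simp [Function.support, (exp_pos _).ne']

theorem millsRatio_antitone : Antitone millsRatio := fun a b hab => by
  simp only [millsRatio_eq_integral]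
  refine setIntegral_mono_on (integrable_exp_neg_mul_sub_sq_div_two b).integrableOn
    (integrable_exp_neg_mul_sub_sq_div_two a).integrableOn measurableSet_Ioi fun s hs => ?_
  gcongr
  exact le_of_lt hs

theorem millsRatio_le_rpow_mul_rpow (a b : ℝ) {α β : ℝ} (hα : 0 ≤ α) (hβ : 0 ≤ β)
    (hαβ : α + β = 1) :
    millsRatio (α * a + β * b) ≤ millsRatio a ^ α * millsRatio b ^ β := by
  simp only [millsRatio_eq_integral]
  refine le_of_eq_of_le ?_ (integral_rpow_mul_rpow_le
    (Filter.Eventually.of_forall fun s => (exp_pos _).le)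
    (Filter.Eventually.of_forall fun s => (exp_pos _).le)
    (integrable_exp_neg_mul_sub_sq_div_two a).integrableOn
    (integrable_exp_neg_mul_sub_sq_div_two b).integrableOn hα hβ hαβ)
  refine setIntegral_congr_fun measurableSet_Ioi fun s _ => ?_
  simp only [← exp_mul, ← exp_add]
  congr 1
  linear_combination (s ^ 2 / 2) * hαβ

theorem convexOn_log_millsRatio : ConvexOn ℝ univ fun x => log (millsRatio x) :=
  ⟨convex_univ, fun a _ b _ α β hα hβ hαβ => by
    calc log (millsRatio (α • a + β • b))
        ≤ log (millsRatio a ^ α * millsRatio b ^ β) :=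
          log_le_log (millsRatio_pos _) (millsRatio_le_rpow_mul_rpow a b hα hβ hαβ)
      _ = α • log (millsRatio a) + β • log (millsRatio b) := by
          rw [log_mul (rpow_pos_of_pos (millsRatio_pos a) α).ne'
            (rpow_pos_of_pos (millsRatio_pos b) β).ne', log_rpow (millsRatio_pos a),
            log_rpow (millsRatio_pos b), smul_eq_mul, smul_eq_mul]⟩

theorem Matrix.PosSemidef.dotProduct_mulVec_le_sqrt_mul_sqrt {n : Type*} [Fintype n]
    {M : Matrix n n ℝ} (hM : M.PosSemidef) (x y : n → ℝ) :
    x ⬝ᵥ M *ᵥ y ≤ √(x ⬝ᵥ M *ᵥ x) * √(y ⬝ᵥ M *ᵥ y) := by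
  let := M.toSeminormedAddCommGroup hM
  let := M.toInnerProductSpace hM
  have h : (M *ᵥ y) ⬝ᵥ star x ≤
      √(RCLike.re ((M *ᵥ x) ⬝ᵥ star x)) * √(RCLike.re ((M *ᵥ y) ⬝ᵥ star y)) :=
    real_inner_le_norm x y
  simpa [dotProduct_comm] using h

theorem Matrix.one_dotProduct_diagonal_mul_mul_diagonal_mulVec_one {n R : Type*} [Fintype n]
    [DecidableEq n] [Semiring R] (u : n → R) (A : Matrix n n R) :
    (fun _ => (1 : R)) ⬝ᵥ (diagonal u * A * diagonal u) *ᵥ (fun _ => 1) = u ⬝ᵥ A *ᵥ u := by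
  have hmulVec : diagonal u *ᵥ (fun _ => 1) = u := by ext; simp [mulVec_diagonal]
  have hvecMul : (fun _ => 1) ᵥ* diagonal u = u := by ext; simp [vecMul_diagonal]
  rw [← mulVec_mulVec, ← mulVec_mulVec, dotProduct_mulVec, hmulVec, hvecMul]

theorem Matrix.sum_diagonal_mulVec {n R : Type*} [Fintype n] [DecidableEq n]
    [NonUnitalNonAssocSemiring R] (u w : n → R) :
    ∑ i, (diagonal u *ᵥ w) i = u ⬝ᵥ w := by
  simp [mulVec_diagonal, dotProduct]

theorem millsRatio_prod_lower_bound_general (d : ℕ)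
    (S : Matrix (Fin d) (Fin d) ℝ) (hS : S.PosDef)
    (v : Fin d → ℝ)
    (x : Fin d → ℝ) :
    let Vinvsqrt : Matrix (Fin d) (Fin d) ℝ := Matrix.diagonal fun i => (Real.sqrt (v i))⁻¹
    let dSigma : ℝ := (fun _ => (1 : ℝ)) ⬝ᵥ (Vinvsqrt * S⁻¹ * Vinvsqrt).mulVec (fun _ => (1 : ℝ))
    (∏ c, millsRatio ((Vinvsqrt.mulVec (S⁻¹.mulVec x)) c))
      ≥ millsRatio ((Real.sqrt dSigma / (d : ℝ)) * Real.sqrt (x ⬝ᵥ S⁻¹.mulVec x)) ^ d := by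
  intro Vinvsqrt dSigma
  set u : Fin d → ℝ := fun i => (√(v i))⁻¹
  set y := Vinvsqrt *ᵥ S⁻¹ *ᵥ x
  have hmean : (∑ c, y c) / d ≤ √dSigma / d * √(x ⬝ᵥ S⁻¹ *ᵥ x) := by
    rw [div_mul_eq_mul_div]
    gcongr
    rw [Matrix.sum_diagonal_mulVec,
      show dSigma = u ⬝ᵥ S⁻¹ *ᵥ u from one_dotProduct_diagonal_mul_mul_diagonal_mulVec_one u S⁻¹]
    exact hS.inv.posSemidef.dotProduct_mulVec_le_sqrt_mul_sqrt u x
  calc millsRatio (√dSigma / d * √(x ⬝ᵥ S⁻¹ *ᵥ x)) ^ d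
      ≤ millsRatio ((∑ c, y c) / d) ^ d := by
        gcongr
        · exact (millsRatio_pos _).le
        · exact millsRatio_antitone hmean
    _ ≤ ∏ c, millsRatio (y c) := by
        simpa using pow_le_prod_of_convexOn_log millsRatio_pos convexOn_log_millsRatio y

/-- With `d_Σ := 𝟙ᵀ (V^{-1/2} Σ⁻¹ V^{-1/2}) 𝟙`, for every `x ∈ ℝ^d`,
`∏_c R((V^{-1/2}Σ⁻¹x)_c) ≥ R((√d_Σ/d)·√(xᵀΣ⁻¹x))^d`. -/
theorem millsRatio_prod_lower_bound (d : ℕ)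
    (S : Matrix (Fin d) (Fin d) ℝ) (hS : S.PosDef)
    (v : Fin d → ℝ) (hv : ∀ i, 0 < v i)
    (x : Fin d → ℝ) :
    let Vinvsqrt : Matrix (Fin d) (Fin d) ℝ := Matrix.diagonal fun i => (Real.sqrt (v i))⁻¹
    let dSigma : ℝ := (fun _ => (1 : ℝ)) ⬝ᵥ (Vinvsqrt * S⁻¹ * Vinvsqrt).mulVec (fun _ => (1 : ℝ))
    (∏ c, millsRatio ((Vinvsqrt.mulVec (S⁻¹.mulVec x)) c))
      ≥ millsRatio ((Real.sqrt dSigma / (d : ℝ)) * Real.sqrt (x ⬝ᵥ S⁻¹.mulVec x)) ^ d :=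
  millsRatio_prod_lower_bound_general d S hS v x
end

section
/- Let Z be a finite subset of ℝ^h, d ≥ 1, and θ, λ ∈ ℝ^{h×d}. Then S*(λ) ≠ S*(θ) if and only if at least one of the following holds: (a) there exist distinct z, x ∈ S*(θ) such that λᵀz ≺ λᵀx; or (b) there exists z ∈ Z ∖ S*(θ) such that for every x ∈ S*(θ), λᵀz ⊀ λᵀx. -/
open Matrix

/-- Pareto domination on `ℝ^d`: `u ≺ v` iff `u_c ≤ v_c` for all `c` and `u_c < v_c`
for some `c`. -/
def ParetoDom {d : ℕ} (u v : Fin d → ℝ) : Prop :=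
  (∀ c, u c ≤ v c) ∧ ∃ c, u c < v c

/-- The Pareto set of a parameter `l ∈ ℝ^{h×d}` relative to a set of answers
`Z ⊆ ℝ^h`. -/
def paretoSet {h d : ℕ} (Z : Set (Fin h → ℝ)) (l : Matrix (Fin h) (Fin d) ℝ) :
    Set (Fin h → ℝ) :=
  {z ∈ Z | ¬ ∃ x ∈ Z, x ≠ z ∧ ParetoDom (lᵀ.mulVec z) (lᵀ.mulVec x)}

lemma ParetoDom.ne' {d : ℕ} {u v : Fin d → ℝ} (hp : ParetoDom u v) : u ≠ v := by
  rintro rfl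
  obtain ⟨_, c, hc⟩ := hp
  exact lt_irrefl _ hc

lemma ParetoDom.trans' {d : ℕ} {u v w : Fin d → ℝ} (h1 : ParetoDom u v)
    (h2 : ParetoDom v w) : ParetoDom u w :=
  ⟨fun c => (h1.1 c).trans (h2.1 c), h1.2.imp fun c hc => lt_of_lt_of_le hc (h2.1 c)⟩

lemma mem_paretoSet_iff {h d : ℕ} {Z : Set (Fin h → ℝ)} {l : Matrix (Fin h) (Fin d) ℝ}
    {z : Fin h → ℝ} :
    z ∈ paretoSet Z l ↔ z ∈ Z ∧ ¬ ∃ x ∈ Z, x ≠ z ∧ ParetoDom (lᵀ.mulVec z) (lᵀ.mulVec x) :=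
  Iff.rfl

open scoped Classical in
lemma exists_dom_mem_paretoSet {h d : ℕ} (Z : Finset (Fin h → ℝ))
    (l : Matrix (Fin h) (Fin d) ℝ) :
    ∀ n (z : Fin h → ℝ), z ∈ Z →
      (Z.filter (fun x => ParetoDom (lᵀ.mulVec z) (lᵀ.mulVec x))).card ≤ n →
      z ∉ paretoSet (↑Z) l →
      ∃ x ∈ paretoSet (↑Z) l, ParetoDom (lᵀ.mulVec z) (lᵀ.mulVec x) := by
  intro n
  induction n with
  | zero =>
    intro z hz hcard hzn
    rw [mem_paretoSet_iff, not_and, not_not] at hzn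
    obtain ⟨x, hxZ, hxz, hdom⟩ := hzn (by exact_mod_cast hz)
    exfalso
    have : x ∈ Z.filter (fun x => ParetoDom (lᵀ.mulVec z) (lᵀ.mulVec x)) := by
      simp [Finset.mem_filter, hdom]; exact_mod_cast hxZ
    have := Finset.card_pos.mpr ⟨x, this⟩
    omega
  | succ n ih =>
    intro z hz hcard hzn
    rw [mem_paretoSet_iff, not_and, not_not] at hzn
    obtain ⟨x, hxZ, hxz, hdom⟩ := hzn (by exact_mod_cast hz)
    have hxZ' : x ∈ Z := by exact_mod_cast hxZ
    by_cases hx : x ∈ paretoSet (↑Z) l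
    · exact ⟨x, hx, hdom⟩
    · have hsub : Z.filter (fun y => ParetoDom (lᵀ.mulVec x) (lᵀ.mulVec y)) ⊆
          (Z.filter (fun y => ParetoDom (lᵀ.mulVec z) (lᵀ.mulVec y))).erase x := by
        intro y hy
        rw [Finset.mem_filter] at hy
        rw [Finset.mem_erase, Finset.mem_filter]
        refine ⟨?_, hy.1, hdom.trans' hy.2⟩
        rintro rfl
        exact hy.2.ne' rfl
      have hxmem : x ∈ Z.filter (fun y => ParetoDom (lᵀ.mulVec z) (lᵀ.mulVec y)) :=
        Finset.mem_filter.mpr ⟨hxZ', hdom⟩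
      have hlt : (Z.filter (fun y => ParetoDom (lᵀ.mulVec x) (lᵀ.mulVec y))).card ≤ n := by
        have h1 := Finset.card_le_card hsub
        have h2 := Finset.card_erase_of_mem hxmem
        have h3 := Finset.card_pos.mpr ⟨x, hxmem⟩
        omega
      obtain ⟨y, hy, hdy⟩ := ih x hxZ' hlt hx
      exact ⟨y, hy, hdom.trans' hdy⟩

/-- `S*(λ) ≠ S*(θ)` iff either two distinct elements of `S*(θ)` are ordered under `λ`,
or some `z ∈ Z ∖ S*(θ)` is dominated by no element of `S*(θ)` under `λ`. -/
theorem alt_characterization (h d : ℕ) (hd : 1 ≤ d)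
    (Z : Finset (Fin h → ℝ)) (θ l : Matrix (Fin h) (Fin d) ℝ) :
    paretoSet (↑Z) l ≠ paretoSet (↑Z) θ ↔
      (∃ z ∈ paretoSet (↑Z) θ, ∃ x ∈ paretoSet (↑Z) θ, z ≠ x ∧
          ParetoDom (lᵀ.mulVec z) (lᵀ.mulVec x)) ∨
      (∃ z ∈ (↑Z : Set (Fin h → ℝ)) \ paretoSet (↑Z) θ,
          ∀ x ∈ paretoSet (↑Z) θ, ¬ ParetoDom (lᵀ.mulVec z) (lᵀ.mulVec x)) := by
  classical
  constructor
  · intro hne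
    by_contra hcon
    push_neg at hcon
    obtain ⟨ha, hb'⟩ := hcon
    apply hne
    apply Set.Subset.antisymm
    · -- S(λ) ⊆ S(θ)
      intro w hw
      have hwZ : w ∈ (↑Z : Set (Fin h → ℝ)) := hw.1
      by_contra hwS
      obtain ⟨x, hxS, hdom⟩ := hb' w ⟨hwZ, hwS⟩
      exact hw.2 ⟨x, hxS.1, fun hxw => hdom.ne' (by rw [hxw]), hdom⟩
    · -- S(θ) ⊆ S(λ)
      intro w hw
      refine ⟨hw.1, ?_⟩
      rintro ⟨x, hxZ, hxw, hdom⟩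
      by_cases hxS : x ∈ paretoSet (↑Z) θ
      · exact ha w hw x hxS (fun hwx => hxw hwx.symm) hdom
      · obtain ⟨y, hyS, hdy⟩ := hb' x ⟨hxZ, hxS⟩
        have hdwy := hdom.trans' hdy
        exact ha w hw y hyS (fun hwy => hdwy.ne' (by rw [hwy])) hdwy
  · rintro (⟨z, hzS, x, hxS, hzx, hdom⟩ | ⟨z, ⟨hzZ, hzS⟩, hnd⟩) heq
    · -- case (a): z ∈ S(θ) but z ∉ S(λ)
      have hzl : z ∉ paretoSet (↑Z) l := by
        rintro ⟨_, hno⟩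
        exact hno ⟨x, hxS.1, fun hxz => hzx hxz.symm, hdom⟩
      rw [heq] at hzl
      exact hzl hzS
    · -- case (b)
      have hzl : z ∉ paretoSet (↑Z) l := by rw [heq]; exact hzS
      have hzZ' : z ∈ Z := by exact_mod_cast hzZ
      obtain ⟨x, hxl, hdom⟩ := exists_dom_mem_paretoSet Z l Z.card z hzZ'
        (Finset.card_filter_le _ _) hzl
      rw [heq] at hxl
      exact hnd x hxl hdom
end
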